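/- (Deterministic core of the main iteration-invariant theorem.) Let 𝒜 : ℝ^{m×n} → ℝ^p be a linear map satisfying the R-RIP at rank r+ℓ with constant δ₁ ∈ (0,1) and at rank 2r with constant δ₂ ∈ (0,1), where ℓ ≥ r and δ₂ ≤ δ₁, and suppose ‖𝒜‖² ≤ mn/p. Suppose y = 𝒜(X★) + e with rank(X★) ≤ r. Let C ≥ 4, let X_i have rank(X_i) ≤ r with f(X_i) > C²‖e‖₂², set μ = 1/(2(1+δ₁)), let ϵ ≥ 0 and X̃ with rank(X̃) ≤ ℓ satisfy ‖X̃ − (X_i − μ∇f(X_i))‖_F² ≤ (1+ϵ)·‖X★ − (X_i − μ∇f(X_i))‖_F² and f(X̃) > C²‖e‖₂². Let X_{i+1} be a matrix with rank(X_{i+1}) ≤ r satisfying ‖X_{i+1} − X̃‖_F ≤ ‖X★ − X̃‖_F (e.g., a best rank-r approximation of X̃), and assume f(X_{i+1}) ≥ C²‖e‖₂². Then f(X_{i+1}) ≤ θ·f(X_i) + τ·‖e‖₂², where θ = 12·((1+δ₂)/(1−δ₁))·( (ϵ/(1+δ₁))·(mn/p) + (1+ϵ)·(3δ₁/(1−δ₂))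 ) and τ = ((1+δ₂)/(1−δ₁))·( 12(1+ϵ)·(1 + 2δ₁/(1−δ₂)) + 8 ). -/
import Mathlib

open scoped BigOperators

/-- Squared Frobenius norm of a real matrix. -/
noncomputable def frobSq {m n : ℕ} (X : Matrix (Fin m) (Fin n) ℝ) : ℝ :=
  ∑ i, ∑ j, (X i j) ^ 2

/-- Frobenius norm of a real matrix. -/
noncomputable def frobNorm {m n : ℕ} (X : Matrix (Fin m) (Fin n) ℝ) : ℝ :=
  Real.sqrt (frobSq X)

/-- Frobenius inner product `⟨X, Y⟩ = tr(Xᵀ Y)`. -/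
noncomputable def frobInner {m n : ℕ} (X Y : Matrix (Fin m) (Fin n) ℝ) : ℝ :=
  ∑ i, ∑ j, X i j * Y i j

/-- Squared Euclidean norm on `ℝ^p`. -/
noncomputable def vecNormSq {p : ℕ} (v : Fin p → ℝ) : ℝ := ∑ i, (v i) ^ 2

/-- Euclidean norm on `ℝ^p`. -/
noncomputable def vecNorm {p : ℕ} (v : Fin p → ℝ) : ℝ := Real.sqrt (vecNormSq v)

/-- Euclidean inner product on `ℝ^p`. -/
noncomputable def dotp {p : ℕ} (v w : Fin p → ℝ) : ℝ := ∑ i, v i * w i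

/-- Rank restricted isometry property (R-RIP) at rank `s` with constant `δ`. -/
def RIP {m n p : ℕ} (A : Matrix (Fin m) (Fin n) ℝ →ₗ[ℝ] (Fin p → ℝ)) (s : ℕ) (δ : ℝ) : Prop :=
  ∀ X : Matrix (Fin m) (Fin n) ℝ, X.rank ≤ s →
    (1 - δ) * frobSq X ≤ vecNormSq (A X) ∧ vecNormSq (A X) ≤ (1 + δ) * frobSq X

/-- The data error `f(X) = ‖y - 𝒜 X‖₂²`. -/
noncomputable def dataErr {m n p : ℕ} (A : Matrix (Fin m) (Fin n) ℝ →ₗ[ℝ] (Fin p → ℝ))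
    (y : Fin p → ℝ) (X : Matrix (Fin m) (Fin n) ℝ) : ℝ :=
  vecNormSq (y - A X)

/-- `Aadj` is the adjoint of `A` with respect to the Frobenius and Euclidean inner products. -/
def IsAdjoint {m n p : ℕ} (A : Matrix (Fin m) (Fin n) ℝ →ₗ[ℝ] (Fin p → ℝ))
    (Aadj : (Fin p → ℝ) →ₗ[ℝ] Matrix (Fin m) (Fin n) ℝ) : Prop :=
  ∀ (z : Fin p → ℝ) (X : Matrix (Fin m) (Fin n) ℝ), frobInner (Aadj z) X = dotp z (A X)

/-- The gradient `∇f(X) = 2 𝒜*(𝒜 X - y)` of the data error. -/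
noncomputable def gradErr {m n p : ℕ} (A : Matrix (Fin m) (Fin n) ℝ →ₗ[ℝ] (Fin p → ℝ))
    (Aadj : (Fin p → ℝ) →ₗ[ℝ] Matrix (Fin m) (Fin n) ℝ) (y : Fin p → ℝ)
    (X : Matrix (Fin m) (Fin n) ℝ) : Matrix (Fin m) (Fin n) ℝ :=
  (2 : ℝ) • Aadj (A X - y)

section Helpers

lemma vecNormSq_nonneg' {p : ℕ} (v : Fin p → ℝ) : 0 ≤ vecNormSq v :=
  Finset.sum_nonneg fun _ _ => sq_nonneg _

lemma frobSq_nonneg' {m n : ℕ} (X : Matrix (Fin m) (Fin n) ℝ) : 0 ≤ frobSq X :=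
  Finset.sum_nonneg fun _ _ => Finset.sum_nonneg fun _ _ => sq_nonneg _

lemma vecNormSq_sub' {p : ℕ} (u v : Fin p → ℝ) :
    vecNormSq (u - v) = vecNormSq u - 2 * dotp u v + vecNormSq v := by
  unfold vecNormSq dotp
  rw [Finset.mul_sum, ← Finset.sum_sub_distrib, ← Finset.sum_add_distrib]
  refine Finset.sum_congr rfl fun i _ => ?_
  simp [Pi.sub_apply]; ring

lemma vecNormSq_add' {p : ℕ} (u v : Fin p → ℝ) :
    vecNormSq (u + v) = vecNormSq u + 2 * dotp u v + vecNormSq v := by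
  unfold vecNormSq dotp
  rw [Finset.mul_sum, ← Finset.sum_add_distrib, ← Finset.sum_add_distrib]
  refine Finset.sum_congr rfl fun i _ => ?_
  simp [Pi.add_apply]; ring

lemma vecNormSq_neg' {p : ℕ} (v : Fin p → ℝ) : vecNormSq (-v) = vecNormSq v := by
  unfold vecNormSq
  refine Finset.sum_congr rfl fun i _ => ?_
  simp

lemma dotp_sq_le' {p : ℕ} (u v : Fin p → ℝ) :
    (dotp u v) ^ 2 ≤ vecNormSq u * vecNormSq v :=
  Finset.sum_mul_sq_le_sq_mul_sq _ _ _

lemma frobInner_sq_le' {m n : ℕ} (X Y : Matrix (Fin m) (Fin n) ℝ) :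
    (frobInner X Y) ^ 2 ≤ frobSq X * frobSq Y := by
  have h1 : frobInner X Y = ∑ x : Fin m × Fin n, X x.1 x.2 * Y x.1 x.2 := by
    rw [Fintype.sum_prod_type]; rfl
  have h2 : frobSq X = ∑ x : Fin m × Fin n, (X x.1 x.2) ^ 2 := by
    rw [Fintype.sum_prod_type]; rfl
  have h3 : frobSq Y = ∑ x : Fin m × Fin n, (Y x.1 x.2) ^ 2 := by
    rw [Fintype.sum_prod_type]; rfl
  rw [h1, h2, h3]
  exact Finset.sum_mul_sq_le_sq_mul_sq _ _ _

lemma frobSq_sub' {m n : ℕ} (X Y : Matrix (Fin m) (Fin n) ℝ) :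
    frobSq (X - Y) = frobSq X - 2 * frobInner X Y + frobSq Y := by
  unfold frobSq frobInner
  rw [Finset.mul_sum, ← Finset.sum_sub_distrib, ← Finset.sum_add_distrib]
  refine Finset.sum_congr rfl fun i _ => ?_
  rw [Finset.mul_sum, ← Finset.sum_sub_distrib, ← Finset.sum_add_distrib]
  refine Finset.sum_congr rfl fun j _ => ?_
  simp [Matrix.sub_apply]; ring

lemma frobSq_add_smul' {m n : ℕ} (P Q : Matrix (Fin m) (Fin n) ℝ) (c : ℝ) :
    frobSq (P + c • Q) = frobSq P + 2 * c * frobInner P Q + c ^ 2 * frobSq Q := by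
  unfold frobSq frobInner
  rw [Finset.mul_sum, Finset.mul_sum, ← Finset.sum_add_distrib, ← Finset.sum_add_distrib]
  refine Finset.sum_congr rfl fun i _ => ?_
  rw [Finset.mul_sum, Finset.mul_sum, ← Finset.sum_add_distrib, ← Finset.sum_add_distrib]
  refine Finset.sum_congr rfl fun j _ => ?_
  simp [Matrix.add_apply, Matrix.smul_apply, smul_eq_mul]; ring

lemma frobSq_smul' {m n : ℕ} (c : ℝ) (X : Matrix (Fin m) (Fin n) ℝ) :
    frobSq (c • X) = c ^ 2 * frobSq X := by
  unfold frobSq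
  rw [Finset.mul_sum]
  refine Finset.sum_congr rfl fun i _ => ?_
  rw [Finset.mul_sum]
  refine Finset.sum_congr rfl fun j _ => ?_
  simp [Matrix.smul_apply, smul_eq_mul]; ring

lemma frobInner_comm' {m n : ℕ} (X Y : Matrix (Fin m) (Fin n) ℝ) :
    frobInner X Y = frobInner Y X := by
  unfold frobInner
  exact Finset.sum_congr rfl fun i _ => Finset.sum_congr rfl fun j _ => mul_comm _ _

lemma frobInner_self' {m n : ℕ} (X : Matrix (Fin m) (Fin n) ℝ) :
    frobInner X X = frobSq X := by
  unfold frobInner frobSq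
  exact Finset.sum_congr rfl fun i _ => Finset.sum_congr rfl fun j _ => (sq (X i j)).symm

lemma frobInner_smul_left' {m n : ℕ} (c : ℝ) (X Y : Matrix (Fin m) (Fin n) ℝ) :
    frobInner (c • X) Y = c * frobInner X Y := by
  unfold frobInner
  rw [Finset.mul_sum]
  refine Finset.sum_congr rfl fun i _ => ?_
  rw [Finset.mul_sum]
  refine Finset.sum_congr rfl fun j _ => ?_
  simp [Matrix.smul_apply, smul_eq_mul]; ring

lemma dotp_neg_left' {p : ℕ} (u v : Fin p → ℝ) : dotp (-u) v = - dotp u v := by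
  unfold dotp
  rw [← Finset.sum_neg_distrib]
  exact Finset.sum_congr rfl fun i _ => by simp

lemma matrank_add_le' {m n : ℕ} (X Y : Matrix (Fin m) (Fin n) ℝ) :
    (X + Y).rank ≤ X.rank + Y.rank := by
  classical
  unfold Matrix.rank
  have hr : LinearMap.range (X + Y).mulVecLin ≤
      LinearMap.range X.mulVecLin ⊔ LinearMap.range Y.mulVecLin := by
    rintro x ⟨v, rfl⟩
    rw [Matrix.mulVecLin_add]
    exact Submodule.add_mem_sup (LinearMap.mem_range_self _ v) (LinearMap.mem_range_self _ v)
  calc Module.finrank ℝ (LinearMap.range (X + Y).mulVecLin)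
      ≤ Module.finrank ℝ ↥(LinearMap.range X.mulVecLin ⊔ LinearMap.range Y.mulVecLin) :=
        Submodule.finrank_mono hr
    _ ≤ _ := Submodule.finrank_add_le_finrank_add_finrank _ _

lemma matrank_neg' {m n : ℕ} (X : Matrix (Fin m) (Fin n) ℝ) : (-X).rank = X.rank := by
  have h : (-X).mulVecLin = -(X.mulVecLin) := by
    ext v i
    simp [Matrix.mulVecLin_apply, Matrix.mulVec, dotProduct, Finset.sum_neg_distrib,
      Pi.single_apply, Finset.sum_ite_eq']
  unfold Matrix.rank
  rw [h, LinearMap.range_neg]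

lemma matrank_sub_le' {m n : ℕ} (X Y : Matrix (Fin m) (Fin n) ℝ) :
    (X - Y).rank ≤ X.rank + Y.rank := by
  rw [sub_eq_add_neg]
  simpa [matrank_neg'] using matrank_add_le' X (-Y)

end Helpers


section AuxReal

lemma le_of_sq_le_sq'' (x y : ℝ) (h : x ^ 2 ≤ y ^ 2) (hy : 0 ≤ y) : x ≤ y := by
  nlinarith [sq_nonneg (x - y), sq_nonneg (x + y)]

/-- residual bound: if `Fv = G + 2d + Ev`, `d² ≤ G·Ev`, `16 Ev ≤ Fv` then `G ≤ 3/2 Fv + Ev`. -/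
lemma aux_G_le (G d Fv Ev : ℝ) (hrel : Fv = G + 2 * d + Ev) (hd2 : d ^ 2 ≤ G * Ev)
    (hFE : 16 * Ev ≤ Fv) (hE0 : 0 ≤ Ev) (hG0 : 0 ≤ G) (hF0 : 0 ≤ Fv) :
    G ≤ 3 / 2 * Fv + Ev := by
  have h4EF : 4 * Ev * Fv = 4 * Ev * G + 8 * Ev * d + 4 * Ev * Ev := by rw [hrel]; ring
  have key : (-(2 * d) - 2 * Ev) ^ 2 ≤ (Fv / 2) ^ 2 := by
    nlinarith [hd2, h4EF, mul_nonneg hF0 (show (0:ℝ) ≤ Fv - 16 * Ev by linarith)]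
  have h5 := le_of_sq_le_sq'' _ _ key (by linarith)
  linarith

/-- next-iterate bound: if `Nv = G + 2d + Ev`, `d² ≤ G·Ev`, `16 Ev ≤ Nv` then `9 Nv ≤ 16 G`. -/
lemma aux_N (G d Nv Ev : ℝ) (hrel : Nv = G + 2 * d + Ev) (hd2 : d ^ 2 ≤ G * Ev)
    (hNE : 16 * Ev ≤ Nv) (hE0 : 0 ≤ Ev) (hG0 : 0 ≤ G) : 9 * Nv ≤ 16 * G := by
  have key : (24 * d) ^ 2 ≤ (4 * G + 36 * Ev) ^ 2 := by
    nlinarith [hd2, sq_nonneg (4 * G - 36 * Ev)]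
  have h24 := le_of_sq_le_sq'' _ _ key (by linarith)
  linarith

/-- triangle-type bound. -/
lemma aux_U (W V I : ℝ) (hI : I ^ 2 ≤ W * V) (hVW : V ≤ W) (hW0 : 0 ≤ W) (hV0 : 0 ≤ V) :
    W - 2 * I + V ≤ 4 * W := by
  nlinarith [hI, hVW, hW0, hV0, sq_nonneg (I + W)]

/-- descent combination. -/
lemma aux_T (δ₁ δ₂ ε ρ Fv Tv Ev Dsq GD Gg Qt : ℝ)
    (h1δ₁ : (0:ℝ) < 1 + δ₁) (h1δ₂' : (0:ℝ) < 1 - δ₂) (hε : 0 ≤ ε)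
    (hδ₁0 : 0 < δ₁) (hδ₂₁ : δ₂ ≤ δ₁)
    (hF0 : 0 ≤ Fv) (hE0 : 0 ≤ Ev) (hGD0 : 0 ≤ GD)
    (e2' : 4 * (1 + δ₁) * Tv ≤ 4 * (1 + δ₁) * Fv + Qt - Gg)
    (e3' : Qt ≤ (1 + ε) * (4 * (1 + δ₁) * (Ev - Fv) + 4 * (1 + δ₁) ^ 2 * Dsq
      - 4 * (1 + δ₁) * GD + Gg))
    (hDlb : (1 - δ₂) * Dsq ≤ GD)
    (hGD : GD ≤ 3 / 2 * Fv + Ev)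
    (hGg : Gg ≤ 4 * ρ * Fv) :
    (1 - δ₂) * (4 * (1 + δ₁)) * Tv ≤ 4 * (1 + δ₁) * (1 - δ₂) * ((1 + ε) * Ev - ε * Fv)
      + 4 * (1 + δ₁) * (1 + ε) * (3 * δ₁ * Fv + 2 * δ₁ * Ev) + 4 * ε * (1 - δ₂) * ρ * Fv := by
  have s1 : (1 - δ₂) * ((1 + δ₁) * Dsq - GD) ≤ 3 * δ₁ * Fv + 2 * δ₁ * Ev := by
    nlinarith [mul_le_mul_of_nonneg_left hDlb (le_of_lt h1δ₁), hGD, hGD0, hδ₂₁, hδ₁0]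
  have hT1 : 4 * (1 + δ₁) * Tv ≤ 4 * (1 + δ₁) * ((1 + ε) * Ev - ε * Fv)
      + (1 + ε) * (4 * (1 + δ₁) * ((1 + δ₁) * Dsq - GD)) + ε * Gg := by
    nlinarith [e2', e3']
  have p1 := mul_le_mul_of_nonneg_left hT1 (le_of_lt h1δ₂')
  have p2 := mul_le_mul_of_nonneg_left s1
    (show (0:ℝ) ≤ 4 * (1 + δ₁) * (1 + ε) by nlinarith)
  have p3 := mul_le_mul_of_nonneg_left hGg
    (show (0:ℝ) ≤ ε * (1 - δ₂) by nlinarith)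
  nlinarith [p1, p2, p3]

/-- chain for the next iterate. -/
lemma aux_Nkey (δ₁ δ₂ Nv Tv Gu U W Gw : ℝ)
    (h1δ₁' : (0:ℝ) < 1 - δ₁) (h1δ₂ : (0:ℝ) < 1 + δ₂)
    (h9N : 9 * Nv ≤ 16 * Gu) (hUub : Gu ≤ (1 + δ₂) * U) (hU : U ≤ 4 * W)
    (hWlb : (1 - δ₁) * W ≤ Gw) (hGw : 16 * Gw ≤ 25 * Tv) :
    9 * (1 - δ₁) * Nv ≤ 100 * (1 + δ₂) * Tv := by
  have p1 := mul_le_mul_of_nonneg_left h9N (le_of_lt h1δ₁')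
  have p2 := mul_le_mul_of_nonneg_left hUub (show (0:ℝ) ≤ 16 * (1 - δ₁) by linarith)
  have p3 := mul_le_mul_of_nonneg_left hU
    (show (0:ℝ) ≤ 16 * (1 + δ₂) * (1 - δ₁) by nlinarith)
  have p4 := mul_le_mul_of_nonneg_left hWlb (show (0:ℝ) ≤ 64 * (1 + δ₂) by linarith)
  have p5 := mul_le_mul_of_nonneg_left hGw (show (0:ℝ) ≤ 4 * (1 + δ₂) by linarith)
  nlinarith [p1, p2, p3, p4, p5]

/-- final combination with divisions. -/
lemma aux_final (δ₁ δ₂ ε ρ Fv Tv Nv Ev : ℝ)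
    (hδ₁0 : 0 < δ₁) (hδ₁1 : δ₁ < 1) (hδ₂0 : 0 < δ₂) (hδ₂1 : δ₂ < 1)
    (hε : 0 ≤ ε) (hρ0 : 0 ≤ ρ) (hF0 : 0 ≤ Fv) (hE0 : 0 ≤ Ev)
    (hTkey : (1 - δ₂) * (4 * (1 + δ₁)) * Tv
      ≤ 4 * (1 + δ₁) * (1 - δ₂) * ((1 + ε) * Ev - ε * Fv)
        + 4 * (1 + δ₁) * (1 + ε) * (3 * δ₁ * Fv + 2 * δ₁ * Ev) + 4 * ε * (1 - δ₂) * ρ * Fv)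
    (hNkey : 9 * (1 - δ₁) * Nv ≤ 100 * (1 + δ₂) * Tv) :
    Nv ≤ (12 * ((1 + δ₂) / (1 - δ₁)) * ((ε / (1 + δ₁)) * ρ + (1 + ε) * (3 * δ₁ / (1 - δ₂)))) * Fv
      + (((1 + δ₂) / (1 - δ₁)) * (12 * (1 + ε) * (1 + 2 * δ₁ / (1 - δ₂)) + 8)) * Ev := by
  have h1δ₁ : (0:ℝ) < 1 + δ₁ := by linarith
  have h1δ₁' : (0:ℝ) < 1 - δ₁ := by linarith
  have h1δ₂ : (0:ℝ) < 1 + δ₂ := by linarith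
  have h1δ₂' : (0:ℝ) < 1 - δ₂ := by linarith
  have h1ε : (0:ℝ) ≤ 1 + ε := by linarith
  have hbig : 36 * (1 - δ₁) * (1 - δ₂) * (1 + δ₁) * Nv
      ≤ 432 * (1 + δ₂) * (ε * ρ * (1 - δ₂) + 3 * δ₁ * (1 + ε) * (1 + δ₁)) * Fv
        + 36 * (1 + δ₁) * (1 + δ₂) * (12 * (1 + ε) * ((1 - δ₂) + 2 * δ₁) + 8 * (1 - δ₂)) * Ev := by
    have q1 := mul_le_mul_of_nonneg_left hNkey
      (show (0:ℝ) ≤ 4 * (1 + δ₁) * (1 - δ₂) by nlinarith)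
    have q2 := mul_le_mul_of_nonneg_left hTkey (show (0:ℝ) ≤ 100 * (1 + δ₂) by linarith)
    have sl1 : (0:ℝ) ≤ (1 + δ₂) * ε * ρ * (1 - δ₂) * Fv :=
      mul_nonneg (mul_nonneg (mul_nonneg (mul_nonneg (le_of_lt h1δ₂) hε) hρ0)
        (le_of_lt h1δ₂')) hF0
    have sl2 : (0:ℝ) ≤ (1 + δ₂) * (1 + δ₁) * (1 - δ₂) * ε * Fv :=
      mul_nonneg (mul_nonneg (mul_nonneg (mul_nonneg (le_of_lt h1δ₂) (le_of_lt h1δ₁))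
        (le_of_lt h1δ₂')) hε) hF0
    have sl3 : (0:ℝ) ≤ δ₁ * (1 + ε) * (1 + δ₁) * (1 + δ₂) * Fv :=
      mul_nonneg (mul_nonneg (mul_nonneg (mul_nonneg (le_of_lt hδ₁0) h1ε)
        (le_of_lt h1δ₁)) (le_of_lt h1δ₂)) hF0
    have sl4 : (0:ℝ) ≤ (1 + δ₂) * (1 + δ₁) * (1 + ε) * ((1 - δ₂) + 2 * δ₁) * Ev :=
      mul_nonneg (mul_nonneg (mul_nonneg (mul_nonneg (le_of_lt h1δ₂) (le_of_lt h1δ₁))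
        h1ε) (by linarith)) hE0
    have sl5 : (0:ℝ) ≤ (1 + δ₁) * (1 + δ₂) * (1 - δ₂) * Ev :=
      mul_nonneg (mul_nonneg (mul_nonneg (le_of_lt h1δ₁) (le_of_lt h1δ₂))
        (le_of_lt h1δ₂')) hE0
    nlinarith [q1, q2, sl1, sl2, sl3, sl4, sl5]
  have hP : (0:ℝ) < 36 * (1 - δ₁) * (1 - δ₂) * (1 + δ₁) := by positivity
  have hne1 : (1:ℝ) - δ₁ ≠ 0 := ne_of_gt h1δ₁'
  have hne2 : (1:ℝ) - δ₂ ≠ 0 := ne_of_gt h1δ₂'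
  have hne3 : (1:ℝ) + δ₁ ≠ 0 := ne_of_gt h1δ₁
  rw [show (12 * ((1 + δ₂) / (1 - δ₁)) * ((ε / (1 + δ₁)) * ρ + (1 + ε) * (3 * δ₁ / (1 - δ₂)))) * Fv
      + (((1 + δ₂) / (1 - δ₁)) * (12 * (1 + ε) * (1 + 2 * δ₁ / (1 - δ₂)) + 8)) * Ev
      = (432 * (1 + δ₂) * (ε * ρ * (1 - δ₂) + 3 * δ₁ * (1 + ε) * (1 + δ₁)) * Fv
        + 36 * (1 + δ₁) * (1 + δ₂) * (12 * (1 + ε) * ((1 - δ₂) + 2 * δ₁) + 8 * (1 - δ₂)) * Ev)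
        / (36 * (1 - δ₁) * (1 - δ₂) * (1 + δ₁)) by
    field_simp
    ring]
  rw [le_div_iff₀ hP]
  nlinarith [hbig]


lemma aux_adj (s V w dd ρ : ℝ) (hs : s = dd) (hcs : dd ^ 2 ≤ V * w) (hn : w ≤ ρ * s)
    (hs0 : 0 ≤ s) (hV : 0 ≤ V) (hρ0 : 0 ≤ ρ) : s ≤ ρ * V := by
  rcases hs0.eq_or_lt with h | h
  · rw [← h]; exact mul_nonneg hρ0 hV
  · nlinarith [hcs, hn, hs, h, hV]

lemma aux_e2 (a Tv Fv I V S Q G : ℝ) (ha : 0 ≤ a)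
    (h1 : Tv = Fv + I + V) (h2 : 4 * a ^ 2 * Q = 4 * a ^ 2 * S + 4 * a * I + G)
    (h3 : V ≤ a * S) :
    4 * a * Tv ≤ 4 * a * Fv + 4 * a ^ 2 * Q - G := by
  have h1' : 4 * a * Tv = 4 * a * Fv + 4 * a * I + 4 * a * V := by rw [h1]; ring
  have h3' := mul_le_mul_of_nonneg_left h3 (by linarith : (0:ℝ) ≤ 4 * a)
  nlinarith [h1', h2, h3']

lemma aux_e34 (a ε Qt Qs R : ℝ) (ha : 0 ≤ a) (happ : Qt ≤ (1 + ε) * Qs)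
    (h4 : 4 * a ^ 2 * Qs = R) : 4 * a ^ 2 * Qt ≤ (1 + ε) * R := by
  have h := mul_le_mul_of_nonneg_left happ (show (0:ℝ) ≤ 4 * a ^ 2 by positivity)
  rw [← h4]
  nlinarith [h]

lemma aux_e4 (a Ev Fv I GD Dsq Q G : ℝ)
    (h1 : Ev = Fv + I + GD)
    (h2 : 4 * a ^ 2 * Q = 4 * a ^ 2 * Dsq + 4 * a * I + G) :
    4 * a ^ 2 * Q = 4 * a * (Ev - Fv) + 4 * a ^ 2 * Dsq - 4 * a * GD + G := by
  linear_combination h2 - (4 * a) * h1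

end AuxReal

set_option maxHeartbeats 1000000 in
/-- Deterministic core of the main iteration-invariant theorem.
Under the R-RIP at ranks `r+ℓ` (constant `δ₁`) and `2r` (constant `δ₂ ≤ δ₁`), `ℓ ≥ r`,
`‖𝒜‖² ≤ mn/p`, `y = 𝒜 X★ + e` with `rank X★ ≤ r`, `C ≥ 4`, `rank X_i ≤ r`,
`f(X_i) > C²‖e‖₂²`, `μ = 1/(2(1+δ₁))`, an `(1+ϵ)`-approximate projection `X̃` of
`X_i - μ∇f(X_i)` with `rank X̃ ≤ ℓ` and `f(X̃) > C²‖e‖₂²`, and `X_{i+1}` of rank `≤ r`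
with `‖X_{i+1} - X̃‖_F ≤ ‖X★ - X̃‖_F` and `f(X_{i+1}) ≥ C²‖e‖₂²`, one has
`f(X_{i+1}) ≤ θ f(X_i) + τ‖e‖₂²` with
`θ = 12((1+δ₂)/(1-δ₁))((ϵ/(1+δ₁))(mn/p) + (1+ϵ)(3δ₁/(1-δ₂)))` and
`τ = ((1+δ₂)/(1-δ₁))(12(1+ϵ)(1 + 2δ₁/(1-δ₂)) + 8)`. -/
theorem stmt11 {m n p : ℕ} (hp : 0 < p)
    (A : Matrix (Fin m) (Fin n) ℝ →ₗ[ℝ] (Fin p → ℝ))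
    (Aadj : (Fin p → ℝ) →ₗ[ℝ] Matrix (Fin m) (Fin n) ℝ) (hAdj : IsAdjoint A Aadj)
    (r ℓ : ℕ) (hℓ : r ≤ ℓ)
    (δ₁ δ₂ : ℝ) (hδ₁0 : 0 < δ₁) (hδ₁1 : δ₁ < 1) (hδ₂0 : 0 < δ₂) (hδ₂1 : δ₂ < 1)
    (hδ₂₁ : δ₂ ≤ δ₁)
    (hRIP1 : RIP A (r + ℓ) δ₁) (hRIP2 : RIP A (2 * r) δ₂)
    (hnorm : ∀ Z : Matrix (Fin m) (Fin n) ℝ,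
      vecNormSq (A Z) ≤ ((m : ℝ) * n / p) * frobSq Z)
    (Xstar : Matrix (Fin m) (Fin n) ℝ) (hXstar : Xstar.rank ≤ r)
    (e : Fin p → ℝ) (y : Fin p → ℝ) (hy : y = A Xstar + e)
    (C : ℝ) (hC : 4 ≤ C)
    (Xi : Matrix (Fin m) (Fin n) ℝ) (hXi : Xi.rank ≤ r)
    (hfXi : dataErr A y Xi > C ^ 2 * vecNormSq e)
    (μ : ℝ) (hμ : μ = 1 / (2 * (1 + δ₁)))
    (ε : ℝ) (hε : 0 ≤ ε)
    (Xt : Matrix (Fin m) (Fin n) ℝ) (hXt : Xt.rank ≤ ℓ)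
    (happrox : frobSq (Xt - (Xi - μ • gradErr A Aadj y Xi)) ≤
      (1 + ε) * frobSq (Xstar - (Xi - μ • gradErr A Aadj y Xi)))
    (hfXt : dataErr A y Xt > C ^ 2 * vecNormSq e)
    (Xnext : Matrix (Fin m) (Fin n) ℝ) (hXnext : Xnext.rank ≤ r)
    (hXnextClose : frobNorm (Xnext - Xt) ≤ frobNorm (Xstar - Xt))
    (hfXnext : dataErr A y Xnext ≥ C ^ 2 * vecNormSq e) :
    dataErr A y Xnext ≤
      (12 * ((1 + δ₂) / (1 - δ₁)) *
          ((ε / (1 + δ₁)) * ((m : ℝ) * n / p) + (1 + ε) * (3 * δ₁ / (1 - δ₂))))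
        * dataErr A y Xi
      + (((1 + δ₂) / (1 - δ₁)) * (12 * (1 + ε) * (1 + 2 * δ₁ / (1 - δ₂)) + 8))
        * vecNormSq e := by
  have h1δ₁ : (0:ℝ) < 1 + δ₁ := by linarith
  have h1δ₁' : (0:ℝ) < 1 - δ₁ := by linarith
  have h1δ₂ : (0:ℝ) < 1 + δ₂ := by linarith
  have h1δ₂' : (0:ℝ) < 1 - δ₂ := by linarith
  have hρ0 : (0:ℝ) ≤ (m : ℝ) * n / p := by positivity
  set g : Matrix (Fin m) (Fin n) ℝ := gradErr A Aadj y Xi with hgdef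
  set b : Matrix (Fin m) (Fin n) ℝ := Xi - μ • g with hbdef
  have hE0 : 0 ≤ vecNormSq e := vecNormSq_nonneg' e
  have hF0 : 0 ≤ dataErr A y Xi := vecNormSq_nonneg' (y - A Xi)
  have hT0 : 0 ≤ dataErr A y Xt := vecNormSq_nonneg' (y - A Xt)
  have hN0 : 0 ≤ dataErr A y Xnext := vecNormSq_nonneg' (y - A Xnext)
  have hC2 : (16:ℝ) ≤ C ^ 2 := by nlinarith
  have h16E : 16 * vecNormSq e ≤ C ^ 2 * vecNormSq e := mul_le_mul_of_nonneg_right hC2 hE0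
  have hFE : 16 * vecNormSq e ≤ dataErr A y Xi := by linarith only [h16E, hfXi]
  have hTE : 16 * vecNormSq e ≤ dataErr A y Xt := by linarith only [h16E, hfXt]
  have hNE : 16 * vecNormSq e ≤ dataErr A y Xnext := by linarith only [h16E, hfXnext]
  have hμ1 : 2 * μ * (1 + δ₁) = 1 := by
    rw [hμ]; field_simp
  -- exact quadratic expansion of the data error around Xi
  have hexp : ∀ X : Matrix (Fin m) (Fin n) ℝ,
      dataErr A y X = dataErr A y Xi + frobInner g (X - Xi) + vecNormSq (A (X - Xi)) := by
    intro X
    have h1 : y - A X = (y - A Xi) - A (X - Xi) := by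
      rw [map_sub]; abel
    have h2 : frobInner g (X - Xi) = -(2 * dotp (y - A Xi) (A (X - Xi))) := by
      have hgg : g = (2:ℝ) • Aadj (A Xi - y) := hgdef
      rw [hgg, frobInner_smul_left', hAdj]
      rw [show A Xi - y = -(y - A Xi) by abel, dotp_neg_left']
      ring
    calc dataErr A y X = vecNormSq ((y - A Xi) - A (X - Xi)) := by
          unfold dataErr; rw [h1]
      _ = dataErr A y Xi + frobInner g (X - Xi) + vecNormSq (A (X - Xi)) := by
          rw [vecNormSq_sub', h2]; unfold dataErr; ring
  -- scaled quadratic identity for the proxy point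
  have hquad4 : ∀ X : Matrix (Fin m) (Fin n) ℝ,
      4 * (1 + δ₁) ^ 2 * frobSq (X - b) =
        4 * (1 + δ₁) ^ 2 * frobSq (X - Xi) + 4 * (1 + δ₁) * frobInner g (X - Xi)
          + frobSq g := by
    intro X
    have hXb : X - b = (X - Xi) + μ • g := by
      rw [hbdef]; ext i j
      simp [Matrix.sub_apply, Matrix.add_apply, Matrix.smul_apply]
      ring
    rw [hXb, frobSq_add_smul']
    have hc : frobInner g (X - Xi) = frobInner (X - Xi) g := frobInner_comm' _ _
    rw [hc]
    linear_combination (4 * (1 + δ₁) * frobInner (X - Xi) g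
      + (2 * μ * (1 + δ₁) + 1) * frobSq g) * hμ1
  -- rank bounds and RIP consequences
  have hrkTt : (Xt - Xi).rank ≤ r + ℓ :=
    (matrank_sub_le' Xt Xi).trans (by omega)
  have hrkD : (Xstar - Xi).rank ≤ 2 * r :=
    (matrank_sub_le' Xstar Xi).trans (by omega)
  have hrkW : (Xstar - Xt).rank ≤ r + ℓ :=
    (matrank_sub_le' Xstar Xt).trans (by omega)
  have hrkU : (Xstar - Xnext).rank ≤ 2 * r :=
    (matrank_sub_le' Xstar Xnext).trans (by omega)
  have hub1 : vecNormSq (A (Xt - Xi)) ≤ (1 + δ₁) * frobSq (Xt - Xi) := (hRIP1 _ hrkTt).2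
  have hDlb : (1 - δ₂) * frobSq (Xstar - Xi) ≤ vecNormSq (A (Xstar - Xi)) := (hRIP2 _ hrkD).1
  have hWlb : (1 - δ₁) * frobSq (Xstar - Xt) ≤ vecNormSq (A (Xstar - Xt)) := (hRIP1 _ hrkW).1
  have hUub : vecNormSq (A (Xstar - Xnext)) ≤ (1 + δ₂) * frobSq (Xstar - Xnext) :=
    (hRIP2 _ hrkU).2
  -- adjoint norm bound and gradient bound
  have hadjb : ∀ z : Fin p → ℝ, frobSq (Aadj z) ≤ ((m : ℝ) * n / p) * vecNormSq z := by
    intro z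
    refine aux_adj _ _ (vecNormSq (A (Aadj z))) (dotp z (A (Aadj z))) _ ?_
      (dotp_sq_le' z (A (Aadj z))) ?_ (frobSq_nonneg' _) (vecNormSq_nonneg' z) hρ0
    · rw [← frobInner_self', hAdj]
    · exact hnorm (Aadj z)
  have hGg : frobSq g ≤ 4 * ((m : ℝ) * n / p) * dataErr A y Xi := by
    have h1 : frobSq g = 4 * frobSq (Aadj (A Xi - y)) := by
      rw [hgdef, gradErr, frobSq_smul']; norm_num
    have h2 := hadjb (A Xi - y)
    have h3 : vecNormSq (A Xi - y) = dataErr A y Xi := by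
      rw [show A Xi - y = -(y - A Xi) by abel, vecNormSq_neg']; rfl
    rw [h3] at h2
    linarith only [h1, h2]
  -- ‖A(Xstar - Xi)‖² ≤ (3/2) F + E
  have hGD : vecNormSq (A (Xstar - Xi)) ≤ 3 / 2 * dataErr A y Xi + vecNormSq e := by
    have hrel : dataErr A y Xi = vecNormSq (A (Xstar - Xi)) + 2 * dotp (A (Xstar - Xi)) e
        + vecNormSq e := by
      have h1 : y - A Xi = A (Xstar - Xi) + e := by rw [hy, map_sub]; abel
      unfold dataErr; rw [h1, vecNormSq_add']
    exact aux_G_le _ _ _ _ hrel (dotp_sq_le' _ _) hFE hE0 (vecNormSq_nonneg' _) hF0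
  -- ‖A(Xstar - Xt)‖² ≤ (25/16) T
  have hGw : 16 * vecNormSq (A (Xstar - Xt)) ≤ 25 * dataErr A y Xt := by
    have hrel : dataErr A y Xt = vecNormSq (A (Xstar - Xt)) + 2 * dotp (A (Xstar - Xt)) e
        + vecNormSq e := by
      have h1 : y - A Xt = A (Xstar - Xt) + e := by rw [hy, map_sub]; abel
      unfold dataErr; rw [h1, vecNormSq_add']
    have h2 := aux_G_le _ _ _ _ hrel (dotp_sq_le' _ _) hTE hE0 (vecNormSq_nonneg' _) hT0
    linarith only [h2, hTE]
  -- 9 N ≤ 16 ‖A(Xstar - Xnext)‖²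
  have h9N : 9 * dataErr A y Xnext ≤ 16 * vecNormSq (A (Xstar - Xnext)) := by
    have hrel : dataErr A y Xnext = vecNormSq (A (Xstar - Xnext))
        + 2 * dotp (A (Xstar - Xnext)) e + vecNormSq e := by
      have h1 : y - A Xnext = A (Xstar - Xnext) + e := by rw [hy, map_sub]; abel
      unfold dataErr; rw [h1, vecNormSq_add']
    exact aux_N _ _ _ _ hrel (dotp_sq_le' _ _) hNE hE0 (vecNormSq_nonneg' _)
  -- frobSq (Xstar - Xnext) ≤ 4 frobSq (Xstar - Xt)
  have hV : frobSq (Xnext - Xt) ≤ frobSq (Xstar - Xt) := by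
    have h1 : frobSq (Xnext - Xt) = (frobNorm (Xnext - Xt)) ^ 2 := by
      rw [frobNorm, Real.sq_sqrt (frobSq_nonneg' _)]
    have h2 : frobSq (Xstar - Xt) = (frobNorm (Xstar - Xt)) ^ 2 := by
      rw [frobNorm, Real.sq_sqrt (frobSq_nonneg' _)]
    rw [h1, h2]
    exact pow_le_pow_left₀ (Real.sqrt_nonneg _) hXnextClose 2
  have hU : frobSq (Xstar - Xnext) ≤ 4 * frobSq (Xstar - Xt) := by
    have hid : Xstar - Xnext = (Xstar - Xt) - (Xnext - Xt) := by abel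
    rw [hid, frobSq_sub']
    exact aux_U _ _ _ (frobInner_sq_le' _ _) hV (frobSq_nonneg' _) (frobSq_nonneg' _)
  -- descent chain
  have e2' : 4 * (1 + δ₁) * dataErr A y Xt ≤ 4 * (1 + δ₁) * dataErr A y Xi
      + 4 * (1 + δ₁) ^ 2 * frobSq (Xt - b) - frobSq g :=
    aux_e2 (1 + δ₁) _ _ _ _ _ _ _ (le_of_lt h1δ₁) (hexp Xt) (hquad4 Xt) hub1
  have hfstar : vecNormSq e = dataErr A y Xstar := by
    have h1 : y - A Xstar = e := by rw [hy]; abel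
    unfold dataErr; rw [h1]
  have e4' : 4 * (1 + δ₁) ^ 2 * frobSq (Xstar - b)
      = 4 * (1 + δ₁) * (vecNormSq e - dataErr A y Xi)
        + 4 * (1 + δ₁) ^ 2 * frobSq (Xstar - Xi)
        - 4 * (1 + δ₁) * vecNormSq (A (Xstar - Xi)) + frobSq g := by
    refine aux_e4 (1 + δ₁) _ _ _ _ _ _ _ ?_ (hquad4 Xstar)
    rw [hfstar]; exact hexp Xstar
  have e3' : 4 * (1 + δ₁) ^ 2 * frobSq (Xt - b)
      ≤ (1 + ε) * (4 * (1 + δ₁) * (vecNormSq e - dataErr A y Xi)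
        + 4 * (1 + δ₁) ^ 2 * frobSq (Xstar - Xi)
        - 4 * (1 + δ₁) * vecNormSq (A (Xstar - Xi)) + frobSq g) :=
    aux_e34 (1 + δ₁) ε _ _ _ (le_of_lt h1δ₁) happrox e4'
  have hTkey := aux_T δ₁ δ₂ ε ((m : ℝ) * n / p) (dataErr A y Xi) (dataErr A y Xt)
    (vecNormSq e) (frobSq (Xstar - Xi)) (vecNormSq (A (Xstar - Xi))) (frobSq g)
    (4 * (1 + δ₁) ^ 2 * frobSq (Xt - b))
    h1δ₁ h1δ₂' hε hδ₁0 hδ₂₁ hF0 hE0 (vecNormSq_nonneg' _) e2' e3' hDlb hGD hGg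
  have hNkey := aux_Nkey δ₁ δ₂ (dataErr A y Xnext) (dataErr A y Xt)
    (vecNormSq (A (Xstar - Xnext))) (frobSq (Xstar - Xnext)) (frobSq (Xstar - Xt))
    (vecNormSq (A (Xstar - Xt))) h1δ₁' h1δ₂ h9N hUub hU hWlb hGw
  exact aux_final δ₁ δ₂ ε ((m : ℝ) * n / p) (dataErr A y Xi) (dataErr A y Xt)
    (dataErr A y Xnext) (vecNormSq e) hδ₁0 hδ₁1 hδ₂0 hδ₂1 hε hρ0 hF0 hE0 hTkey hNkey
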